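/- Let k = 2 and m ≥ 1, and let h, r, t be segmented embeddings. If the even segment of r vanishes (r₀ = 0), then the SEEK scoring function is antisymmetric in the head and tail: f₄(h, r, t) = −f₄(t, r, h). In particular, the odd segment of the relation embedding preserves the antisymmetry property of relations when k = 2. -/

import Mathlib

open Finset

def mdot {m : ℕ} (a b c : Fin m → ℝ) : ℝ := ∑ i : Fin m, a i * b i * c i

def sSign {k : ℕ} (x y : Fin k) : ℝ :=
  if x.val % 2 = 1 ∧ k ≤ x.val + y.val then -1 else 1

def wIdx {k : ℕ} (x y : Fin k) : Fin k :=
  if x.val % 2 = 0 then y else ⟨(x.val + y.val) % k, Nat.mod_lt _ x.pos⟩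

def f4 {k m : ℕ} (h r t : Fin k → Fin m → ℝ) : ℝ :=
  ∑ x : Fin k, ∑ y : Fin k, sSign x y * mdot (r x) (h y) (t (wIdx x y))

def f2 {k m : ℕ} (h r t : Fin k → Fin m → ℝ) : ℝ :=
  ∑ x : Fin k, ∑ y : Fin k, ∑ w : Fin k, mdot (r x) (h y) (t w)

def f3 {k m : ℕ} (h r t : Fin k → Fin m → ℝ) : ℝ :=
  ∑ x : Fin k, ∑ y : Fin k, ∑ w : Fin k, sSign x y * mdot (r x) (h y) (t w)

/-!
For `k = 2` the even segment `r₀` pairs `hᵧ` with `tᵧ` (sign `+1`), while the odd segment `r₁`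
contributes `⟨r₁, h₀, t₁⟩ - ⟨r₁, h₁, t₀⟩`. Since `⟨a, b, c⟩` is symmetric in `b` and `c`, swapping
`h` and `t` flips the sign of the odd part, so once `r₀ = 0` the whole score changes sign.
-/

theorem mdot_comm_right {m : ℕ} (a b c : Fin m → ℝ) : mdot a b c = mdot a c b := by
  simp only [mdot, mul_right_comm]

@[simp]
theorem mdot_zero_left {m : ℕ} (b c : Fin m → ℝ) : mdot 0 b c = 0 := by
  simp [mdot]

theorem f4_two {m : ℕ} (h r t : Fin 2 → Fin m → ℝ) :
    f4 h r t = mdot (r 0) (h 0) (t 0) + mdot (r 0) (h 1) (t 1)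
      + (mdot (r 1) (h 0) (t 1) - mdot (r 1) (h 1) (t 0)) := by
  rw [f4, Fin.sum_univ_two, Fin.sum_univ_two, Fin.sum_univ_two]
  simp [sSign, wIdx, sub_eq_add_neg, add_assoc]

theorem f4_antisymm_k2_of_even_zero_general (m : ℕ)
    (h r t : Fin 2 → Fin m → ℝ) (hr : r 0 = 0) :
    f4 h r t = -f4 t r h := by
  rw [f4_two, f4_two, hr, mdot_comm_right (r 1) (t 0), mdot_comm_right (r 1) (t 1)]
  simp only [mdot_zero_left]
  ring

/-- For k = 2, if the even segment of r vanishes, then f₄ is antisymmetric in head and tail. -/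
theorem f4_antisymm_k2_of_even_zero (m : ℕ) (hm : 1 ≤ m)
    (h r t : Fin 2 → Fin m → ℝ) (hr : r 0 = 0) :
    f4 h r t = -f4 t r h :=
  f4_antisymm_k2_of_even_zero_general m h r t hr
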